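/- Let A be a finite-dimensional hereditary algebra and Ā its duplicated algebra. Every finitely generated A-module M, regarded as an Ā-module via the canonical surjection Ā → A, has projective dimension at most 1 over Ā. -/

import Mathlib

open TrivSqZeroExt Module CategoryTheory

universe u

section Gen
variable (R : Type u) [Ring R]

/-- A module is indecomposable: nonzero and admitting no nontrivial direct sum decomposition. -/
def Indec (M : ModuleCat.{u} R) : Prop :=
  (⊥ : Submodule R M) ≠ ⊤ ∧ ∀ U V : Submodule R M, IsCompl U V → U = ⊥ ∨ V = ⊥

/-- projective dimension at most `n` -/
def PDimLE : ℕ → ModuleCat.{u} R → Prop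
  | 0, M => Module.Projective R M
  | (n+1), M => ∃ (P : ModuleCat.{u} R) (g : P →ₗ[R] M), Module.Projective R P ∧
      Function.Surjective g ∧ PDimLE n (ModuleCat.of R (LinearMap.ker g))

/-- injective dimension at most 1 -/
def IDimLE1 (M : ModuleCat.{u} R) : Prop :=
  ∃ (I : ModuleCat.{u} R) (f : M →ₗ[R] I), Module.Injective R I ∧ Function.Injective f ∧
    Module.Injective R ((I : Type u) ⧸ LinearMap.range f)

/-- one step in a path: a nonzero morphism between indecomposables -/
def NZHom (M N : ModuleCat.{u} R) : Prop :=
  Indec R M ∧ Indec R N ∧ ∃ f : M →ₗ[R] N, f ≠ 0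

/-- there is a path of nonzero morphisms between indecomposables from `M` to `N` -/
def IsPath (M N : ModuleCat.{u} R) : Prop :=
  Indec R M ∧ Indec R N ∧ Relation.ReflTransGen (NZHom R) M N

/-- `M` lies in the left part `L` of the module category -/
def InLeftPart (M : ModuleCat.{u} R) : Prop :=
  Indec R M ∧ ∀ L : ModuleCat.{u} R, IsPath R L M → PDimLE R 1 L

/-- `M` lies in the right part `R` of the module category -/
def InRightPart (M : ModuleCat.{u} R) : Prop :=
  Indec R M ∧ ∀ N : ModuleCat.{u} R, IsPath R M N → IDimLE1 R N

/-- Ext¹(Z,Y) = 0: every short exact sequence 0 → Y → E → Z → 0 splits. -/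
def Ext1Vanish (Z Y : ModuleCat.{u} R) : Prop :=
  ∀ (E : ModuleCat.{u} R) (f : Y →ₗ[R] E) (g : E →ₗ[R] Z),
    Function.Injective f → Function.Surjective g → Function.Exact f g →
      ∃ s : Z →ₗ[R] E, g.comp s = LinearMap.id

/-- Ext^n(Z,Y) = 0, defined by dimension shifting. -/
def ExtVanish : ℕ → ModuleCat.{u} R → ModuleCat.{u} R → Prop
  | 0, _, _ => True
  | 1, Z, Y => Ext1Vanish R Z Y
  | (n+2), Z, Y => ∀ (P : ModuleCat.{u} R) (g : P →ₗ[R] Z),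
      Module.Projective R P → Function.Surjective g →
        ExtVanish (n+1) (ModuleCat.of R (LinearMap.ker g)) Y

/-- an almost split (Auslander-Reiten) sequence 0 → X → E → Z → 0 -/
def AlmostSplitSeq (X E Z : ModuleCat.{u} R) (f : X →ₗ[R] E) (g : E →ₗ[R] Z) : Prop :=
  Function.Injective f ∧ Function.Surjective g ∧ Function.Exact f g ∧
  Indec R X ∧ Indec R Z ∧
  (¬ ∃ s : Z →ₗ[R] E, g.comp s = LinearMap.id) ∧
  (∀ (W : ModuleCat.{u} R) (h : W →ₗ[R] Z),
     (¬ ∃ s : Z →ₗ[R] W, h.comp s = LinearMap.id) → ∃ u : W →ₗ[R] E, g.comp u = h)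

/-- `N` is an inverse Auslander-Reiten translate `τ⁻¹ M` (realized by an almost split sequence) -/
def IsTauInv (M N : ModuleCat.{u} R) : Prop :=
  ∃ (E : ModuleCat.{u} R) (f : M →ₗ[R] E) (g : E →ₗ[R] N), AlmostSplitSeq R M E N f g

/-- `N` is the Auslander-Reiten translate `τ M` -/
def IsTau (M N : ModuleCat.{u} R) : Prop := IsTauInv R N M

/-- `f : M → I` is an injective envelope -/
def IsInjEnvelope (M I : ModuleCat.{u} R) (f : M →ₗ[R] I) : Prop :=
  Module.Injective R I ∧ Function.Injective f ∧
    ∀ U : Submodule R I, U ≠ ⊥ → U ⊓ LinearMap.range f ≠ ⊥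

/-- `p : P → M` is a projective cover -/
def IsProjCover (P M : ModuleCat.{u} R) (p : P →ₗ[R] M) : Prop :=
  Module.Projective R P ∧ Function.Surjective p ∧
    ∀ U : Submodule R P, U ⊔ LinearMap.ker p = ⊤ → U = ⊤

/-- `N` is a first cosyzygy `Ω⁻¹ M` -/
def IsCosyzygy (M N : ModuleCat.{u} R) : Prop :=
  ∃ (I : ModuleCat.{u} R) (f : M →ₗ[R] I), IsInjEnvelope R M I f ∧
    Nonempty (N ≃ₗ[R] ((I : Type u) ⧸ LinearMap.range f))

/-- `X` is a direct summand of `Y` -/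
def DirectSummand (X Y : ModuleCat.{u} R) : Prop :=
  ∃ (i : X →ₗ[R] Y) (r : Y →ₗ[R] X), r.comp i = LinearMap.id

/-- `M` is projective-injective -/
def ProjInj (M : ModuleCat.{u} R) : Prop := Module.Projective R M ∧ Module.Injective R M

end Gen

section DupAlg
variable (k : Type u) [Field k] (A : Type u) [Ring A] [Algebra k A]

noncomputable instance dualModL : Module (A × A) (Module.Dual k A) where
  smul p q := q.comp (LinearMap.mulRight k p.2)
  one_smul q := by ext x; show q (x * 1) = q x; simp
  mul_smul p p' q := by ext x; show q (x * (p.2 * p'.2)) = q (x * p.2 * p'.2); rw [mul_assoc]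
  smul_zero p := by ext x; rfl
  smul_add p q q' := by ext x; rfl
  add_smul p p' q := by ext x; show q (x * (p.2 + p'.2)) = q (x * p.2) + q (x * p'.2); rw [mul_add, map_add]
  zero_smul q := by ext x; show q (x * 0) = 0; simp

noncomputable instance dualModR : Module (A × A)ᵐᵒᵖ (Module.Dual k A) where
  smul p q := q.comp (LinearMap.mulLeft k p.unop.1)
  one_smul q := by ext x; show q ((1 : A) * x) = q x; simp
  mul_smul p p' q := by
    ext x
    show q ((p'.unop.1 * p.unop.1) * x) = q (p'.unop.1 * (p.unop.1 * x))
    rw [mul_assoc]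
  smul_zero p := by ext x; rfl
  smul_add p q q' := by ext x; rfl
  add_smul p p' q := by
    ext x
    show q ((p.unop.1 + p'.unop.1) * x) = q (p.unop.1 * x) + q (p'.unop.1 * x)
    rw [add_mul, map_add]
  zero_smul q := by ext x; show q ((0 : A) * x) = 0; simp

instance dualSMulComm : SMulCommClass (A × A) (A × A)ᵐᵒᵖ (Module.Dual k A) where
  smul_comm p p' q := by
    ext x
    show q (p'.unop.1 * (x * p.2)) = q ((p'.unop.1 * x) * p.2)
    rw [mul_assoc]

/-- The duplicated algebra Ā = [[A,0],[DA,A]] of `A`, realized as the trivial extension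
of `A × A` by the bimodule `DA = Hom_k(A,k)`. -/
abbrev Dup := TrivSqZeroExt (A × A) (Module.Dual k A)

/-- the canonical surjection Ā → A onto the first diagonal copy of A -/
noncomputable def dupProj₁ : Dup k A →+* A where
  toFun x := x.fst.1
  map_one' := rfl
  map_mul' x y := by simp
  map_zero' := rfl
  map_add' x y := by simp

/-- the canonical surjection Ā → A onto the second diagonal copy of A -/
noncomputable def dupProj₂ : Dup k A →+* A where
  toFun x := x.fst.2
  map_one' := rfl
  map_mul' x y := by simp
  map_zero' := rfl
  map_add' x y := by simp

/-- Right modules over a ring are left modules over its opposite; this is the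
restriction functor from right A-modules to right Ā-modules along Ā → A (first copy),
that is, the standard embedding mod A ↪ mod Ā. -/
noncomputable abbrev resA : ModuleCat.{u} Aᵐᵒᵖ ⥤ ModuleCat.{u} (Dup k A)ᵐᵒᵖ :=
  ModuleCat.restrictScalars (RingHom.op (dupProj₁ k A))

/-- restriction along the second projection Ā → A' -/
noncomputable abbrev resA' : ModuleCat.{u} Aᵐᵒᵖ ⥤ ModuleCat.{u} (Dup k A)ᵐᵒᵖ :=
  ModuleCat.restrictScalars (RingHom.op (dupProj₂ k A))

/-- a right Ā-module "belongs to mod A": the kernel of Ā → A acts as zero,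
i.e. it is the restriction of an A-module along the first projection. -/
def ActsThroughA (M : ModuleCat.{u} (Dup k A)ᵐᵒᵖ) : Prop :=
  ∀ x : Dup k A, x.fst.1 = 0 → ∀ m : M, (MulOpposite.op x) • m = 0

/-- a right Ā-module is the restriction of an A'-module along the second projection. -/
def ActsThroughA' (M : ModuleCat.{u} (Dup k A)ᵐᵒᵖ) : Prop :=
  ∀ x : Dup k A, x.fst.2 = 0 → ∀ m : M, (MulOpposite.op x) • m = 0

/-- the idempotent e' of Ā -/
noncomputable def eDup' : Dup k A := TrivSqZeroExt.inl ((0, 1) : A × A)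

/-- the right ideal e'Ā of Ā, as a right Ā-module -/
noncomputable def eDupMod : ModuleCat.{u} (Dup k A)ᵐᵒᵖ :=
  ModuleCat.of (Dup k A)ᵐᵒᵖ (Submodule.span (Dup k A)ᵐᵒᵖ {eDup' k A})

/-- a ring is (left) hereditary: every (left) ideal is projective. Applied to `Aᵐᵒᵖ`
this says that `A` is right hereditary. -/
def IsHereditaryRing (B : Type u) [Ring B] : Prop :=
  ∀ I : Submodule B B, Module.Projective B I

end DupAlg

section Gen2
variable (R : Type u) [Ring R]

/-- `f` is a split monomorphism (section) -/
def IsSplitMonoL {X Y : ModuleCat.{u} R} (f : X →ₗ[R] Y) : Prop :=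
  ∃ r : Y →ₗ[R] X, r.comp f = LinearMap.id

/-- `f` is a split epimorphism (retraction) -/
def IsSplitEpiL {X Y : ModuleCat.{u} R} (f : X →ₗ[R] Y) : Prop :=
  ∃ s : Y →ₗ[R] X, f.comp s = LinearMap.id

/-- `f` is an irreducible morphism -/
def IrreducibleHom {X Y : ModuleCat.{u} R} (f : X →ₗ[R] Y) : Prop :=
  ¬ IsSplitMonoL R f ∧ ¬ IsSplitEpiL R f ∧
  ∀ (W : ModuleCat.{u} R) (g : X →ₗ[R] W) (h : W →ₗ[R] Y), h.comp g = f →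
    IsSplitMonoL R g ∨ IsSplitEpiL R h

/-- a path `M = M₀ → M₁ → ⋯ → M_t = N` of nonzero morphisms between indecomposables,
recorded with its data -/
structure MPath (M N : ModuleCat.{u} R) where
  len : ℕ
  obj : Fin (len + 1) → ModuleCat.{u} R
  hom : ∀ i : Fin len, obj i.castSucc →ₗ[R] obj i.succ
  indec : ∀ i, Indec R (obj i)
  nonzero : ∀ i, hom i ≠ 0
  first : obj 0 = M
  last : obj (Fin.last len) = N

/-- the path consists of irreducible morphisms -/
def MPath.IsIrr {M N : ModuleCat.{u} R} (p : MPath R M N) : Prop :=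
  ∀ i, IrreducibleHom R (p.hom i)

/-- the path is sectional: `τ M_{i+1} ≇ M_{i-1}` for all `i` -/
def MPath.Sectional {M N : ModuleCat.{u} R} (p : MPath R M N) : Prop :=
  ∀ (i : ℕ) (h : i + 2 ≤ p.len),
    ¬ IsTau R (p.obj ⟨i + 2, by omega⟩) (p.obj ⟨i, by omega⟩)

/-- `q` is a refinement of `p`: a longer path passing through the modules of `p` in order -/
def MPath.Refines {M N : ModuleCat.{u} R} (q p : MPath R M N) : Prop :=
  ∃ σ : Fin (p.len + 1) → Fin (q.len + 1), StrictMono σ ∧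
    σ 0 = 0 ∧ σ (Fin.last p.len) = Fin.last q.len ∧ ∀ i, q.obj (σ i) = p.obj i

/-- `M` is an indecomposable Ext-injective object of `add L` (the additive closure of the
left part): it is in the left part and `Ext¹(X, M) = 0` for every `X` in the left part -/
def ExtInjLeft (M : ModuleCat.{u} R) : Prop :=
  InLeftPart R M ∧ ∀ X : ModuleCat.{u} R, InLeftPart R X → Ext1Vanish R X M

/-- `T` is multiplicity-free: no indecomposable occurs twice as a direct summand -/
def MultFree (T : ModuleCat.{u} R) : Prop :=
  ∀ X : ModuleCat.{u} R, Indec R X →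
    ¬ DirectSummand R (ModuleCat.of R (Prod (X : Type u) (X : Type u))) T

/-- `X` belongs to `add T` -/
def InAdd (T X : ModuleCat.{u} R) : Prop :=
  ∃ n : ℕ, DirectSummand R X (ModuleCat.of R (Fin n → (T : Type u)))

/-- `M` admits a coresolution of length `n` by modules in `add T` -/
def CoresolvedBy (T : ModuleCat.{u} R) : ℕ → ModuleCat.{u} R → Prop
  | 0, M => InAdd R T M
  | (n+1), M => ∃ (T₀ : ModuleCat.{u} R) (f : M →ₗ[R] T₀), InAdd R T T₀ ∧
      Function.Injective f ∧
      CoresolvedBy T n (ModuleCat.of R ((T₀ : Type u) ⧸ LinearMap.range f))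

/-- `T` is a (generalized) tilting module: finite projective dimension, no self-extensions
in positive degrees, and the regular module has a finite coresolution in `add T` -/
def IsTiltingModule (T : ModuleCat.{u} R) : Prop :=
  (∃ n, PDimLE R n T) ∧ (∀ i, 0 < i → ExtVanish R i T T) ∧
  (∃ n, CoresolvedBy R T n (ModuleCat.of R R))

/-- `X` lies in the additive closure of the class `P` of modules -/
def InAddOf (P : ModuleCat.{u} R → Prop) (X : ModuleCat.{u} R) : Prop :=
  ∃ (n : ℕ) (D : Fin n → ModuleCat.{u} R), (∀ i, P (D i)) ∧
    DirectSummand R X (ModuleCat.of R ((i : Fin n) → (D i : Type u)))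

/-- the additive closure of the class `P` is contravariantly finite: every finitely
generated module has a right `add P`-approximation -/
def ContravariantlyFinite (P : ModuleCat.{u} R → Prop) : Prop :=
  ∀ M : ModuleCat.{u} R, Module.Finite R M →
    ∃ (X : ModuleCat.{u} R) (f : X →ₗ[R] M), InAddOf R P X ∧
      ∀ (X' : ModuleCat.{u} R) (g : X' →ₗ[R] M), InAddOf R P X' →
        ∃ h : X' →ₗ[R] X, f.comp h = g

/-- the additive closure of the class `P` is covariantly finite: every finitely
generated module has a left `add P`-approximation -/
def CovariantlyFinite (P : ModuleCat.{u} R → Prop) : Prop :=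
  ∀ M : ModuleCat.{u} R, Module.Finite R M →
    ∃ (X : ModuleCat.{u} R) (f : M →ₗ[R] X), InAddOf R P X ∧
      ∀ (X' : ModuleCat.{u} R) (g : M →ₗ[R] X'), InAddOf R P X' →
        ∃ h : X →ₗ[R] X', h.comp f = g

/-- isomorphism of simple modules, as a setoid -/
def simpleIsoSetoid : Setoid {S : ModuleCat.{u} R // IsSimpleModule R S} where
  r S T := Nonempty (S.1 ≃ₗ[R] T.1)
  iseqv := ⟨fun S => ⟨LinearEquiv.refl _ _⟩,
    fun ⟨e⟩ => ⟨e.symm⟩, fun ⟨e⟩ ⟨f⟩ => ⟨e.trans f⟩⟩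

/-- the number of isomorphism classes of simple `R`-modules (the rank of `K₀(R)`
for a finite dimensional algebra `R`) -/
noncomputable def NumSimples : ℕ := Nat.card (Quotient (simpleIsoSetoid R))

/-- the algebra is representation-finite -/
def RepFinite : Prop :=
  ∃ (n : ℕ) (Ls : Fin n → ModuleCat.{u} R), ∀ M : ModuleCat.{u} R,
    Module.Finite R M → Indec R M → ∃ i, Nonempty (M ≃ₗ[R] Ls i)

/-- the algebra is laura: only finitely many indecomposables lie outside `L ∪ R` -/
def LauraAlg : Prop :=
  ∃ (n : ℕ) (Ls : Fin n → ModuleCat.{u} R), ∀ M : ModuleCat.{u} R,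
    Module.Finite R M → Indec R M → ¬ InLeftPart R M → ¬ InRightPart R M →
      ∃ i, Nonempty (M ≃ₗ[R] Ls i)

end Gen2

section Cat
variable (C : Type u) [Category.{u} C] [Preadditive C] [Limits.HasBinaryBiproducts C]

/-- an object of an additive category is indecomposable -/
def IndecObjC (X : C) : Prop :=
  ¬ Limits.IsZero X ∧ ∀ Y Z : C, Nonempty (X ≅ Y ⊞ Z) →
    Limits.IsZero Y ∨ Limits.IsZero Z

end Cat

instance restrictScalarsAdditive {R S : Type u} [Ring R] [Ring S] (f : R →+* S) :
    (ModuleCat.restrictScalars.{u} f).Additive where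
  map_add := rfl

/-! The map `a ↦ inl (a, 0)` identifies `A` with the right ideal `eĀ`, `e = inl (1, 0)`, so
`A` is a direct summand of `Ā` as a right `Ā`-module. Hence restriction along `Ā → A` preserves
projectivity (equivalently, its right adjoint, coextension of scalars, preserves epimorphisms),
and being exact it carries a projective resolution `0 → K → Aⁿ → M → 0` of `M` over `A` to one
over `Ā`. Here `K` is projective because `A` is hereditary: splitting off one coordinate at a time
exhibits a submodule of `Aⁿ` as an iterated extension of right ideals. -/

theorem Module.Projective.of_exact {R K M P : Type u} [Ring R] [AddCommGroup K] [AddCommGroup M]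
    [AddCommGroup P] [Module R K] [Module R M] [Module R P] [Module.Projective R K]
    [Module.Projective R P] {f : K →ₗ[R] M} {g : M →ₗ[R] P} (h : Function.Exact f g)
    (hf : Function.Injective f) (hg : Function.Surjective g) : Module.Projective R M :=
  have ⟨l, hl⟩ := Module.projective_lifting_property g LinearMap.id hg
  .of_equiv (h.splitSurjectiveEquiv hf ⟨l, hl⟩).1.symm

theorem IsHereditaryRing.projective_submodule_pi {B : Type u} [Ring B] (hB : IsHereditaryRing B) :
    ∀ (n : ℕ) (K : Submodule B (Fin n → B)), Module.Projective B K
  | 0, _ => inferInstance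
  | n + 1, K => by
    let q : K →ₗ[B] B := (LinearMap.proj 0).comp K.subtype
    let τ : LinearMap.ker q →ₗ[B] Fin n → B :=
      (LinearMap.funLeft B B Fin.succ).comp (K.subtype.comp (LinearMap.ker q).subtype)
    have hτ : Function.Injective τ := by
      intro x y hxy
      have h0 : x.1.1 0 = y.1.1 0 := x.2.trans y.2.symm
      exact Subtype.ext (Subtype.ext (funext fun i => Fin.cases h0 (congr_fun hxy) i))
    have hexact : Function.Exact (LinearMap.ker q).subtype q.rangeRestrict := by
      intro x
      simp only [Submodule.coe_subtype, Subtype.range_coe_subtype, Set.mem_ofPred_eq,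
        LinearMap.mem_ker, ← Subtype.val_inj]
      rfl
    have : Module.Projective B (LinearMap.ker q) :=
      haveI := hB.projective_submodule_pi n (LinearMap.range τ)
      .of_equiv (LinearEquiv.ofInjective τ hτ).symm
    have : Module.Projective B (LinearMap.range q) := hB _
    exact .of_exact (K := LinearMap.ker q) hexact (LinearMap.ker q).injective_subtype
      q.surjective_rangeRestrict

theorem IsHereditaryRing.pDimLE_one {B : Type u} [Ring B] (hB : IsHereditaryRing B)
    (M : ModuleCat.{u} B) [Module.Finite B M] : PDimLE B 1 M :=
  have ⟨n, φ, hφ⟩ := Module.Finite.exists_fin' B M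
  ⟨.of B (Fin n → B), φ, inferInstance, hφ, hB.projective_submodule_pi n _⟩

namespace ModuleCat

variable {R S : Type u} [Ring R] [Ring S] (f : R →+* S)

theorem projective_restrictScalars_self_of_section (i : S →+ R)
    (hi : ∀ r s, i (f r * s) = r * i s) (hfi : ∀ s, f (i s) = s) :
    Module.Projective R ((restrictScalars f).obj (of S S)) :=
  .of_split (M := R) { toFun := i, map_add' := i.map_add, map_smul' := hi }
    { toFun := f, map_add' := f.map_add, map_smul' := f.map_mul } (LinearMap.ext hfi)

section ProjectiveSelf

variable [Module.Projective R ((restrictScalars f).obj (of S S))]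

instance preservesEpimorphisms_coextendScalars : (coextendScalars f).PreservesEpimorphisms where
  preserves {X Y} g hg := by
    rw [epi_iff_surjective] at hg ⊢
    intro h
    obtain ⟨l, hl⟩ := Module.projective_lifting_property g.hom (CoextendScalars.equiv f Y h) hg
    exact ⟨(CoextendScalars.equiv f X).symm l,
      CoextendScalars.ext (LinearMap.ext fun s => LinearMap.congr_fun hl s)⟩

theorem projective_restrictScalars (P : ModuleCat.{u} S) [Module.Projective S P] :
    Module.Projective R ((restrictScalars f).obj P) := by
  rw [IsProjective.iff_projective]
  exact (restrictCoextendScalarsAdj f).map_projective P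
    ((IsProjective.iff_projective P).mp inferInstance)

theorem pDimLE_restrictScalars :
    ∀ (n : ℕ) (M : ModuleCat.{u} S), PDimLE S n M → PDimLE R n ((restrictScalars f).obj M)
  | 0, M, (_ : Module.Projective S M) => projective_restrictScalars f M
  | n + 1, _, ⟨P, g, _, hg, hK⟩ =>
    ⟨(restrictScalars f).obj P, ((restrictScalars f).map (ofHom g)).hom,
      projective_restrictScalars f P, hg, pDimLE_restrictScalars n _ hK⟩

end ProjectiveSelf

end ModuleCat

section Duplicated

variable (k : Type u) [Field k] (A : Type u) [Ring A] [Algebra k A]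

theorem inl_mk_zero_mul (a : A) (x : Dup k A) :
    (inl (a, 0) : Dup k A) * x = inl (a * x.fst.1, 0) := by
  ext
  · simp
  · simp
  · simp only [snd_mul, snd_inl, smul_zero, add_zero]
    show x.snd (_ * 0) = 0
    rw [mul_zero, map_zero]

theorem projective_resA_obj_self :
    Module.Projective (Dup k A)ᵐᵒᵖ ((resA k A).obj (ModuleCat.of Aᵐᵒᵖ Aᵐᵒᵖ)) :=
  ModuleCat.projective_restrictScalars_self_of_section _
    { toFun a := .op (inl (a.unop, 0))
      map_zero' := rfl
      map_add' a b := by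
        rw [← MulOpposite.op_add, ← inl_add, Prod.mk_add_mk, add_zero]
        rfl }
    (fun x a => congrArg MulOpposite.op (inl_mk_zero_mul k A a.unop x.unop).symm)
    (fun _ => rfl)

end Duplicated

theorem restriction_to_duplicated_algebra_has_pd_le_one_general
    (k A : Type u) [Field k] [Ring A] [Algebra k A]
    (hA : IsHereditaryRing Aᵐᵒᵖ)
    (M : ModuleCat.{u} Aᵐᵒᵖ) [Module.Finite Aᵐᵒᵖ M] :
    PDimLE (Dup k A)ᵐᵒᵖ 1 ((resA k A).obj M) :=
  haveI := projective_resA_obj_self k A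
  ModuleCat.pDimLE_restrictScalars _ 1 M (hA.pDimLE_one M)

/-- Every finitely generated (right) module over a finite dimensional
hereditary algebra A, regarded as a module over the duplicated algebra Ā via the canonical
surjection Ā → A, has projective dimension at most 1 over Ā. -/
theorem restriction_to_duplicated_algebra_has_pd_le_one
    (k A : Type u) [Field k] [IsAlgClosed k] [Ring A] [Algebra k A]
    [FiniteDimensional k A] (hA : IsHereditaryRing Aᵐᵒᵖ)
    (M : ModuleCat.{u} Aᵐᵒᵖ) [Module.Finite Aᵐᵒᵖ M] :
    PDimLE (Dup k A)ᵐᵒᵖ 1 ((resA k A).obj M) :=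
  restriction_to_duplicated_algebra_has_pd_le_one_general k A hA M
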